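/- Consider the star-of-cliques clique-aggregate model with N ≥ 2 cliques: ℕ-valued backlog processes Q_m(t), 1 ≤ m ≤ N, with Q_m(0) = 0 and Q_m(t+1) = Q_m(t) − D_m(t) + A_m(t+1), where the departures under the inner-clique-priority policy φ_IC are D_1(t) = 1{Q_1(t) > 0} and, for m ≥ 2, D_m(t) = 1{Q_1(t) = 0}·1{Q_m(t) > 0}. Assume that for each t the arrival vector (A_1(t+1),…,A_N(t+1)) is independent of (Q(0),…,Q(t)), has mutually independent components each taking values in {0,…,B} for some fixed B, and E[A_m(t+1)] = λ_m. If λ_1 + λ_m < 1 for every m ∈ {2,…,N}, then limsup_{T→∞} (1/T) ∑_{t=0}^{T−1} ∑_{m=1}^{N} E[Q_m(t)] < ∞; i.e., φ_IC is throughput-optimal for the star-of-cliques network. -/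

import Mathlib

/-!
For a peripheral clique `m`, φ_IC serves one packet of the pair {inner clique, clique `m`}
whenever the pair is nonempty, so `W = Q₀ + Q_m` follows the single-server Lindley recursion
`W (t+1) = (W t - 1)⁺ + a (t+1)` with `a = A₀ + A_m` of mean `ρ = λ₀ + λ_m < 1`. Since the
arrivals are independent of the past, `E[W a] = E[W] ρ`, and the drift of `W²` is at most
`-2 (1 - ρ) W + 1 + b²` for arrivals bounded by `b`; telescoping gives
`∑_{t<T} E[W t] ≤ (1 + b²) T / (2 (1 - ρ))`. With at least two cliques the total backlog is
at most `∑_{m ≠ 0} (Q₀ + Q_m)`.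
-/

open MeasureTheory ProbabilityTheory Filter
open scoped ENNReal

theorem Finset.sum_le_sum_erase_add {ι M : Type*} [DecidableEq ι] [AddCommMonoid M]
    [PartialOrder M] [IsOrderedAddMonoid M] [CanonicallyOrderedAdd M]
    (x : ι → M) {s : Finset ι} {i : ι} (hi : i ∈ s) (hs : (s.erase i).Nonempty) :
    ∑ j ∈ s, x j ≤ ∑ j ∈ s.erase i, (x i + x j) := by
  rw [← add_sum_erase s x hi, sum_add_distrib]
  obtain ⟨j, hj⟩ := hs
  gcongr
  exact single_le_sum (f := fun _ => x i) (fun _ _ => zero_le) hj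

theorem Nat.sq_tsub_one_add_le (w a : ℕ) :
    (((w - 1 + a : ℕ) : ℝ)) ^ 2 ≤ (w : ℝ) ^ 2 + 2 * w * (a - 1) + (1 + a ^ 2) := by
  rcases w with _ | w
  · simp
  · push_cast [Nat.add_sub_cancel]
    nlinarith

theorem ENNReal.limsup_sum_range_div_lt_top {f : ℕ → ℝ≥0∞} {K : ℝ≥0∞} (hK : K ≠ ⊤)
    (h : ∀ T, ∑ t ∈ Finset.range T, f t ≤ K * T) :
    limsup (fun T : ℕ => (∑ t ∈ Finset.range T, f t) / T) atTop < ⊤ :=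
  (limsup_le_of_le (by isBoundedDefault)
    (.of_forall fun T => ENNReal.div_le_of_le_mul (h T))).trans_lt hK.lt_top

theorem MeasureTheory.integrable_natCast_of_le {Ω : Type*} [MeasurableSpace Ω] {μ : Measure Ω}
    [IsFiniteMeasure μ] {f : Ω → ℕ} (hf : Measurable f) {k : ℕ} (hk : ∀ ω, f ω ≤ k) :
    Integrable (fun ω => (f ω : ℝ)) μ :=
  .of_bound (by fun_prop) k (.of_forall fun ω => by simpa using hk ω)

theorem lindley_le_mul {Ω : Type*} {W a : ℕ → Ω → ℕ} {b : ℕ} (hW0 : ∀ ω, W 0 ω = 0)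
    (hW : ∀ t ω, W (t + 1) ω = W t ω - 1 + a (t + 1) ω) (ha : ∀ t ω, a (t + 1) ω ≤ b) :
    ∀ t ω, W t ω ≤ t * b
  | 0, ω => by simp [hW0]
  | t + 1, ω => by
    have := lindley_le_mul hW0 hW ha t ω
    have := ha t ω
    rw [hW, add_mul, one_mul]
    omega

section Lindley

variable {Ω : Type*} [MeasurableSpace Ω] {μ : Measure Ω} [IsProbabilityMeasure μ]
  {W a : ℕ → Ω → ℕ} {b : ℕ} {ρ : ℝ}

theorem integral_sq_lindley_succ_le (hW0 : ∀ ω, W 0 ω = 0)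
    (hW : ∀ t ω, W (t + 1) ω = W t ω - 1 + a (t + 1) ω) (ha : ∀ t ω, a (t + 1) ω ≤ b)
    (hWm : ∀ t, Measurable (W t)) (ham : ∀ t, Measurable (a (t + 1)))
    (hmean : ∀ t, ∫ ω, (a (t + 1) ω : ℝ) ∂μ = ρ) (hind : ∀ t, IndepFun (a (t + 1)) (W t) μ)
    (t : ℕ) :
    ∫ ω, (W (t + 1) ω : ℝ) ^ 2 ∂μ
      ≤ ∫ ω, (W t ω : ℝ) ^ 2 ∂μ - 2 * (1 - ρ) * ∫ ω, (W t ω : ℝ) ∂μ + (1 + b ^ 2) := by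
  have hWb := lindley_le_mul hW0 hW ha
  have iWpow (s k : ℕ) : Integrable (fun ω => (W s ω : ℝ) ^ k) μ := by
    simpa using integrable_natCast_of_le (μ := μ) (f := fun ω => W s ω ^ k) (by fun_prop)
      fun ω => Nat.pow_le_pow_left (hWb s ω) k
  have iW : Integrable (fun ω => (W t ω : ℝ)) μ := by simpa using iWpow t 1
  have iWa : Integrable (fun ω => (W t ω : ℝ) * a (t + 1) ω) μ := by
    simpa using integrable_natCast_of_le (μ := μ) (f := fun ω => W t ω * a (t + 1) ω)
      (by fun_prop) fun ω => Nat.mul_le_mul (hWb t ω) (ha t ω)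
  have hWa : ∫ ω, (W t ω : ℝ) * a (t + 1) ω ∂μ = (∫ ω, (W t ω : ℝ) ∂μ) * ρ := by
    rw [← hmean t]
    have hind' := (hind t).symm.comp (φ := ((↑) : ℕ → ℝ)) (ψ := ((↑) : ℕ → ℝ))
      measurable_from_top measurable_from_top
    exact hind'.integral_fun_mul_eq_mul_integral (by fun_prop) (by fun_prop)
  have hpt : ∀ ω, (W (t + 1) ω : ℝ) ^ 2
      ≤ (W t ω : ℝ) ^ 2 + 2 * ((W t ω : ℝ) * a (t + 1) ω) - 2 * W t ω + (1 + b ^ 2) := by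
    intro ω
    have hsq := Nat.sq_tsub_one_add_le (W t ω) (a (t + 1) ω)
    have hab : (a (t + 1) ω : ℝ) ^ 2 ≤ b ^ 2 := by gcongr; exact_mod_cast ha t ω
    rw [hW]
    linarith
  calc ∫ ω, (W (t + 1) ω : ℝ) ^ 2 ∂μ
      ≤ ∫ ω, ((W t ω : ℝ) ^ 2 + 2 * ((W t ω : ℝ) * a (t + 1) ω) - 2 * W t ω + (1 + b ^ 2)) ∂μ :=
        integral_mono (iWpow _ 2) (by fun_prop) hpt
    _ = _ := by
      rw [integral_add (by fun_prop) (integrable_const _), integral_sub (by fun_prop) (by fun_prop),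
        integral_add (iWpow t 2) (by fun_prop), integral_const_mul, integral_const_mul, hWa]
      simp
      ring

theorem sum_integral_lindley_le (hW0 : ∀ ω, W 0 ω = 0)
    (hW : ∀ t ω, W (t + 1) ω = W t ω - 1 + a (t + 1) ω) (ha : ∀ t ω, a (t + 1) ω ≤ b)
    (hWm : ∀ t, Measurable (W t)) (ham : ∀ t, Measurable (a (t + 1)))
    (hmean : ∀ t, ∫ ω, (a (t + 1) ω : ℝ) ∂μ = ρ) (hind : ∀ t, IndepFun (a (t + 1)) (W t) μ)
    (hρ : ρ < 1) (T : ℕ) :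
    ∑ t ∈ Finset.range T, ∫ ω, (W t ω : ℝ) ∂μ ≤ (1 + b ^ 2) / (2 * (1 - ρ)) * T := by
  have htel : ∀ T : ℕ, 2 * (1 - ρ) * ∑ t ∈ Finset.range T, ∫ ω, (W t ω : ℝ) ∂μ
      + ∫ ω, (W T ω : ℝ) ^ 2 ∂μ ≤ (1 + b ^ 2) * T := by
    intro T
    induction T with
    | zero => simp [hW0]
    | succ T ih =>
      have := integral_sq_lindley_succ_le hW0 hW ha hWm ham hmean hind T
      rw [Finset.sum_range_succ]
      push_cast
      linarith
  have hsq : 0 ≤ ∫ ω, (W T ω : ℝ) ^ 2 ∂μ := integral_nonneg fun ω => sq_nonneg _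
  rw [div_mul_eq_mul_div, le_div_iff₀ (by linarith)]
  linarith [htel T]

theorem sum_lintegral_lindley_le (hW0 : ∀ ω, W 0 ω = 0)
    (hW : ∀ t ω, W (t + 1) ω = W t ω - 1 + a (t + 1) ω) (ha : ∀ t ω, a (t + 1) ω ≤ b)
    (hWm : ∀ t, Measurable (W t)) (ham : ∀ t, Measurable (a (t + 1)))
    (hmean : ∀ t, ∫ ω, (a (t + 1) ω : ℝ) ∂μ = ρ) (hind : ∀ t, IndepFun (a (t + 1)) (W t) μ)
    (hρ : ρ < 1) (T : ℕ) :
    ∑ t ∈ Finset.range T, ∫⁻ ω, (W t ω : ℝ≥0∞) ∂μ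
      ≤ ENNReal.ofReal ((1 + b ^ 2) / (2 * (1 - ρ))) * T := by
  have hofReal (t : ℕ) : ∫⁻ ω, (W t ω : ℝ≥0∞) ∂μ = ENNReal.ofReal (∫ ω, (W t ω : ℝ) ∂μ) := by
    rw [ofReal_integral_eq_lintegral_ofReal
      (integrable_natCast_of_le (hWm t) (lindley_le_mul hW0 hW ha t)) (.of_forall fun ω => by simp)]
    simp
  simp_rw [hofReal]
  rw [← ENNReal.ofReal_sum_of_nonneg fun t _ => integral_nonneg fun ω => by simp,
    ← ENNReal.ofReal_natCast, ← ENNReal.ofReal_mul (div_nonneg (by positivity) (by linarith))]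
  exact ENNReal.ofReal_le_ofReal (sum_integral_lindley_le hW0 hW ha hWm ham hmean hind hρ T)

end Lindley

theorem Nat.inner_add_peripheral_eq_lindley (q₀ q a₀ a : ℕ) :
    q₀ - (if 0 < q₀ then 1 else 0) + a₀ + (q - (if q₀ = 0 ∧ 0 < q then 1 else 0) + a)
      = q₀ + q - 1 + (a₀ + a) := by
  split_ifs <;> omega

theorem phiIC_throughput_optimal_general
    {Ω : Type*} [MeasurableSpace Ω] (μ : Measure Ω) [IsProbabilityMeasure μ]
    (N : ℕ) [NeZero N] (hN : 2 ≤ N) (B : ℕ) (lam : Fin N → ℝ)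
    (Q A : ℕ → Fin N → Ω → ℕ)
    (hQmeas : ∀ t m, Measurable (Q t m)) (hAmeas : ∀ t m, Measurable (A t m))
    (hQ0 : ∀ m ω, Q 0 m ω = 0)
    (hAbd : ∀ t m ω, A (t + 1) m ω ≤ B)
    (hAmean : ∀ t m, ∫ ω, (A (t + 1) m ω : ℝ) ∂μ = lam m)
    (hApast : ∀ t, IndepFun (fun ω (m : Fin N) => A (t + 1) m ω)
      (fun ω (s : Fin (t + 1)) (m : Fin N) => Q (s : ℕ) m ω) μ)
    -- evolution of the inner clique: serve it whenever nonempty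
    (hevol0 : ∀ t ω, Q (t + 1) 0 ω
      = Q t 0 ω - (if 0 < Q t 0 ω then 1 else 0) + A (t + 1) 0 ω)
    -- evolution of the peripheral cliques: serve them exactly when the inner clique is empty
    (hevolm : ∀ t (m : Fin N), m ≠ 0 → ∀ ω, Q (t + 1) m ω
      = Q t m ω - (if Q t 0 ω = 0 ∧ 0 < Q t m ω then 1 else 0) + A (t + 1) m ω)
    -- capacity condition
    (hcap : ∀ m : Fin N, m ≠ 0 → lam 0 + lam m < 1) :
    limsup (fun T : ℕ =>
        (∑ t ∈ Finset.range T, ∑ m, ∫⁻ ω, (Q t m ω : ℝ≥0∞) ∂μ) / (T : ℝ≥0∞))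
      atTop < ⊤ := by
  let c (m : Fin N) : ℝ≥0∞ :=
    ENNReal.ofReal ((1 + ((B + B : ℕ) : ℝ) ^ 2) / (2 * (1 - (lam 0 + lam m))))
  have hpair (m : Fin N) (hm : m ≠ 0) (T : ℕ) :
      ∑ t ∈ Finset.range T, ∫⁻ ω, ((Q t 0 ω + Q t m ω : ℕ) : ℝ≥0∞) ∂μ ≤ c m * T := by
    refine sum_lintegral_lindley_le (a := fun t ω => A t 0 ω + A t m ω) (by simp [hQ0])
      (fun t ω => ?_) (fun t ω => add_le_add (hAbd t 0 ω) (hAbd t m ω)) (fun t => by fun_prop)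
      (fun t => by fun_prop) (fun t => ?_) (fun t => ?_) (hcap m hm) T
    · rw [hevol0, hevolm t m hm]
      exact Nat.inner_add_peripheral_eq_lindley ..
    · push_cast
      rw [integral_add (integrable_natCast_of_le (hAmeas _ 0) (hAbd t 0))
        (integrable_natCast_of_le (hAmeas _ m) (hAbd t m)), hAmean, hAmean]
    · exact (hApast t).comp (φ := fun v => v 0 + v m)
        (ψ := fun u => u (Fin.last t) 0 + u (Fin.last t) m) (by fun_prop) (by fun_prop)
  have hperiph : (Finset.univ.erase (0 : Fin N)).Nonempty := ⟨⟨1, hN⟩, by simp [Fin.ext_iff]⟩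
  refine ENNReal.limsup_sum_range_div_lt_top (K := ∑ m ∈ Finset.univ.erase 0, c m)
    (ENNReal.sum_ne_top.2 fun _ _ => ENNReal.ofReal_ne_top) fun T => ?_
  calc ∑ t ∈ Finset.range T, ∑ m, ∫⁻ ω, (Q t m ω : ℝ≥0∞) ∂μ
      ≤ ∑ t ∈ Finset.range T, ∑ m ∈ Finset.univ.erase 0,
          ∫⁻ ω, ((Q t 0 ω + Q t m ω : ℕ) : ℝ≥0∞) ∂μ := by
        gcongr with t
        refine (Finset.sum_le_sum_erase_add _ (Finset.mem_univ 0) hperiph).trans_eq ?_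
        push_cast
        exact Finset.sum_congr rfl fun m _ => (lintegral_add_left (by fun_prop) _).symm
    _ = ∑ m ∈ Finset.univ.erase 0, ∑ t ∈ Finset.range T,
          ∫⁻ ω, ((Q t 0 ω + Q t m ω : ℕ) : ℝ≥0∞) ∂μ := Finset.sum_comm
    _ ≤ ∑ m ∈ Finset.univ.erase 0, c m * T :=
        Finset.sum_le_sum fun m hm => hpair m (Finset.ne_of_mem_erase hm) T
    _ = _ := (Finset.sum_mul ..).symm

/-- Throughput optimality of the inner-clique-priority policy φ_IC for the star-of-cliques
clique-aggregate model: clique `0` (the inner clique) departs one packet whenever nonempty,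
and each peripheral clique `m ≠ 0` departs one packet whenever it is nonempty and the inner
clique is empty. With batch arrivals bounded by `B`, mutually independent across cliques,
independent of the past, of means `λ_m`, and with `λ_0 + λ_m < 1` for every peripheral
clique `m`, the time-averaged total expected backlog has finite limsup. -/
theorem phiIC_throughput_optimal
    {Ω : Type*} [MeasurableSpace Ω] (μ : Measure Ω) [IsProbabilityMeasure μ]
    (N : ℕ) [NeZero N] (hN : 2 ≤ N) (B : ℕ) (lam : Fin N → ℝ)
    (Q A : ℕ → Fin N → Ω → ℕ)
    (hQmeas : ∀ t m, Measurable (Q t m)) (hAmeas : ∀ t m, Measurable (A t m))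
    (hQ0 : ∀ m ω, Q 0 m ω = 0)
    (hAbd : ∀ t m ω, A (t + 1) m ω ≤ B)
    (hAmean : ∀ t m, ∫ ω, (A (t + 1) m ω : ℝ) ∂μ = lam m)
    (hAcomp : ∀ t, iIndepFun (fun m ω => A (t + 1) m ω) μ)
    (hApast : ∀ t, IndepFun (fun ω (m : Fin N) => A (t + 1) m ω)
      (fun ω (s : Fin (t + 1)) (m : Fin N) => Q (s : ℕ) m ω) μ)
    -- evolution of the inner clique: serve it whenever nonempty
    (hevol0 : ∀ t ω, Q (t + 1) 0 ω
      = Q t 0 ω - (if 0 < Q t 0 ω then 1 else 0) + A (t + 1) 0 ω)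
    -- evolution of the peripheral cliques: serve them exactly when the inner clique is empty
    (hevolm : ∀ t (m : Fin N), m ≠ 0 → ∀ ω, Q (t + 1) m ω
      = Q t m ω - (if Q t 0 ω = 0 ∧ 0 < Q t m ω then 1 else 0) + A (t + 1) m ω)
    -- capacity condition
    (hcap : ∀ m : Fin N, m ≠ 0 → lam 0 + lam m < 1) :
    limsup (fun T : ℕ =>
        (∑ t ∈ Finset.range T, ∑ m, ∫⁻ ω, (Q t m ω : ℝ≥0∞) ∂μ) / (T : ℝ≥0∞))
      atTop < ⊤ :=
  phiIC_throughput_optimal_general μ N hN B lam Q A hQmeas hAmeas hQ0 hAbd hAmean hApast hevol0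
    hevolm hcap
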